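/- arXiv:2408.02915 — 4 statements merged into one kernel-verified Lean document; each statement's English description precedes it below -/
import Mathlib

section
/- Let 𝒳 assign to each (t₀,x₀) ∈ [0,T] × C([0,T],H) a nonempty compact set 𝒳(t₀,x₀) ⊂ C([0,T],H), satisfying the semigroup/concatenation properties: (a) if t₀ ≤ t ≤ T and x ∈ 𝒳(t₀,x₀) then 𝒳(t,x) ⊂ 𝒳(t₀,x₀), and (b) x ∈ 𝒳(t,x) for every x ∈ 𝒳(t₀,x₀) and t ∈ [t₀,T]. Let h : C([0,T],H) → ℝ ∪ {+∞} be lower semicontinuous and define v(t₀,x₀) := inf{h(x) : x ∈ 𝒳(t₀,x₀)}. Then the dynamic programming principle holds: for 0 ≤ t₀ < t ≤ T, (i) v(t₀,x₀) ≤ v(t,x) for all x ∈ 𝒳(t₀,x₀), and (ii) there exists x̃₀ ∈ 𝒳(t₀,x₀), independent of t, with v(t₀,x₀) = v(t,x̃₀) for all t ∈ [t₀,T]. -/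
open Set

/-- A lower semicontinuous function into `EReal` attains its infimum on a nonempty
compact set. -/
lemma lsc_exists_min {X : Type*} [TopologicalSpace X] [T2Space X] (h : X → EReal)
    (hlsc : LowerSemicontinuous h) {s : Set X} (hc : IsCompact s) (hne : s.Nonempty) :
    ∃ x ∈ s, h x = sInf (h '' s) := by
  set m := sInf (h '' s) with hm
  suffices H : ∃ x ∈ s, h x ≤ m by
    obtain ⟨x, hxs, hx⟩ := H
    exact ⟨x, hxs, le_antisymm hx (sInf_le (mem_image_of_mem h hxs))⟩
  rcases eq_or_lt_of_le (le_top : m ≤ ⊤) with htop | hlt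
  · obtain ⟨x, hxs⟩ := hne
    refine ⟨x, hxs, ?_⟩
    rw [htop]
    exact le_top
  · have hιne : Nonempty (Ioi m) := ⟨⟨⊤, hlt⟩⟩
    set t : Ioi m → Set X := fun c => s ∩ (h ⁻¹' Iic c.1) with ht
    have htn : ∀ c, (t c).Nonempty := by
      rintro ⟨c, hc'⟩
      have : m < c := hc'
      rw [hm, sInf_lt_iff] at this
      obtain ⟨b, ⟨x, hxs, rfl⟩, hb⟩ := this
      exact ⟨x, hxs, le_of_lt hb⟩
    have htcl : ∀ c, IsClosed (t c) := fun c =>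
      (hc.isClosed.inter (hlsc.isClosed_preimage c.1))
    have htc : ∀ c, IsCompact (t c) := fun c => hc.inter_right (hlsc.isClosed_preimage c.1)
    have htd : Directed (· ⊇ ·) t := by
      rintro ⟨c, hc'⟩ ⟨d, hd'⟩
      refine ⟨⟨min c d, mem_Ioi.2 (lt_min hc' hd')⟩, ?_, ?_⟩
      · exact inter_subset_inter_right _ (preimage_mono (Iic_subset_Iic.2 (min_le_left _ _)))
      · exact inter_subset_inter_right _ (preimage_mono (Iic_subset_Iic.2 (min_le_right _ _)))
    obtain ⟨x, hx⟩ := IsCompact.nonempty_iInter_of_directed_nonempty_isCompact_isClosed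
      t htd htn htc htcl
    simp only [mem_iInter] at hx
    refine ⟨x, (hx ⟨⊤, hlt⟩).1, ?_⟩
    refine le_of_forall_gt_imp_ge_of_dense fun c hc' => ?_
    exact (hx ⟨c, hc'⟩).2

/-- Dynamic programming principle for the value function
`v(t₀,x₀) = inf {h(x) : x ∈ 𝒳(t₀,x₀)}` under the flow properties of the trajectory sets:
(i) `v(t₀,x₀) ≤ v(t,x)` for all `x ∈ 𝒳(t₀,x₀)` and `t₀ < t ≤ T`, and
(ii) there exists `xOpt ∈ 𝒳(t₀,x₀)`, independent of `t`, with `v(t₀,x₀) = v(t,xOpt)`. -/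
theorem dynamic_programming_principle {H : Type*} [NormedAddCommGroup H]
    [InnerProductSpace ℝ H] (T : ℝ) (hT : 0 < T)
    (h : C(Set.Icc (0:ℝ) T, H) → EReal) (hlsc : LowerSemicontinuous h)
    (hbot : ∀ x, h x ≠ ⊥)
    (𝒳 : ℝ → C(Set.Icc (0:ℝ) T, H) → Set (C(Set.Icc (0:ℝ) T, H)))
    (hXne : ∀ t₀ x₀, (𝒳 t₀ x₀).Nonempty)
    (hXcpt : ∀ t₀ x₀, IsCompact (𝒳 t₀ x₀))
    (hflowA : ∀ t₀ x₀ t x, t₀ ≤ t → t ≤ T → x ∈ 𝒳 t₀ x₀ → 𝒳 t x ⊆ 𝒳 t₀ x₀)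
    (hflowB : ∀ t₀ x₀ t x, t₀ ≤ t → t ≤ T → x ∈ 𝒳 t₀ x₀ → x ∈ 𝒳 t x) :
    (∀ (t₀ : ℝ) (x₀ : C(Set.Icc (0:ℝ) T, H)) (t : ℝ), 0 ≤ t₀ → t₀ < t → t ≤ T →
      ∀ x ∈ 𝒳 t₀ x₀, sInf (h '' 𝒳 t₀ x₀) ≤ sInf (h '' 𝒳 t x))
    ∧ (∀ (t₀ : ℝ) (x₀ : C(Set.Icc (0:ℝ) T, H)), 0 ≤ t₀ → t₀ ≤ T →
      ∃ xOpt ∈ 𝒳 t₀ x₀, ∀ t ∈ Set.Icc t₀ T, sInf (h '' 𝒳 t₀ x₀) = sInf (h '' 𝒳 t xOpt)) := by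
  constructor
  · intro t₀ x₀ t _ ht₀t htT x hx
    exact sInf_le_sInf (Set.image_mono (hflowA t₀ x₀ t x ht₀t.le htT hx))
  · intro t₀ x₀ _ _
    obtain ⟨xOpt, hxOpt, hval⟩ := lsc_exists_min h hlsc (hXcpt t₀ x₀) (hXne t₀ x₀)
    refine ⟨xOpt, hxOpt, fun t ⟨ht₀t, htT⟩ => le_antisymm ?_ ?_⟩
    · exact sInf_le_sInf (Set.image_mono (hflowA t₀ x₀ t xOpt ht₀t htT hxOpt))
    · calc sInf (h '' 𝒳 t xOpt) ≤ h xOpt :=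
            sInf_le (Set.mem_image_of_mem h (hflowB t₀ x₀ t xOpt ht₀t htT hxOpt))
        _ = sInf (h '' 𝒳 t₀ x₀) := hval
end

section
/- Brezis–Browder ordering principle: let (S,⪯) be a nonempty preordered set and 𝒩 : S → ℝ be a function that is bounded above and nondecreasing with respect to ⪯ (s₁ ⪯ s₂ implies 𝒩(s₁) ≤ 𝒩(s₂)). Assume every increasing sequence s₁ ⪯ s₂ ⪯ ⋯ in S has an upper bound in S. Then for each s₀ ∈ S there exists an 𝒩-maximal element s ∈ S with s₀ ⪯ s, where s is 𝒩-maximal means: s ⪯ s₊ implies 𝒩(s) = 𝒩(s₊). -/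
/-!
Starting from `s₀`, choose inductively `sₙ₊₁ ⪰ sₙ` whose value comes within `1/(n+1)` of the
supremum of `𝒩` above `sₙ`. An upper bound `s` of this chain is `𝒩`-maximal: anything above `s`
lies above every `sₙ`, so its value exceeds `𝒩 sₙ₊₁ ≤ 𝒩 s` by less than `1/(n+1)`.
-/

open Set

section Preorder

variable {S : Type*} [Preorder S] {N : S → ℝ}

lemma exists_ge_forall_ge_lt_add (hN : BddAbove (range N)) (x : S) {ε : ℝ} (hε : 0 < ε) :
    ∃ t, x ≤ t ∧ ∀ u, x ≤ u → N u < N t + ε := by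
  have hne : (N '' Ici x).Nonempty := ⟨N x, x, le_rfl, rfl⟩
  have hbdd : BddAbove (N '' Ici x) := hN.mono (image_subset_range _ _)
  obtain ⟨_, ⟨t, hxt, rfl⟩, ht⟩ := exists_lt_of_lt_csSup hne (sub_lt_self _ hε)
  refine ⟨t, hxt, fun u hxu => ?_⟩
  have := le_csSup hbdd (mem_image_of_mem N hxu)
  linarith

lemma exists_seq_forall_ge_lt_add (hN : BddAbove (range N)) (s₀ : S) :
    ∃ f : ℕ → S, f 0 = s₀ ∧ (∀ n, f n ≤ f (n + 1)) ∧
      ∀ n u, f n ≤ u → N u < N (f (n + 1)) + 1 / (n + 1) := by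
  choose next hle hlt using fun (n : ℕ) x ↦
    exists_ge_forall_ge_lt_add hN x (Nat.one_div_pos_of_nat (n := n))
  let f : ℕ → S := fun n ↦ Nat.rec s₀ next n
  exact ⟨f, rfl, fun n ↦ hle n (f n), fun n ↦ hlt n (f n)⟩

theorem exists_ge_forall_ge_eq (hN : BddAbove (range N)) (hmono : Monotone N)
    (hub : ∀ f : ℕ → S, (∀ n, f n ≤ f (n + 1)) → ∃ s, ∀ n, f n ≤ s) (s₀ : S) :
    ∃ s, s₀ ≤ s ∧ ∀ t, s ≤ t → N s = N t := by
  obtain ⟨f, rfl, hf, happrox⟩ := exists_seq_forall_ge_lt_add hN s₀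
  obtain ⟨s, hs⟩ := hub f hf
  refine ⟨s, hs 0, fun t hst ↦ le_antisymm (hmono hst) (le_of_forall_pos_lt_add fun ε hε ↦ ?_)⟩
  obtain ⟨n, hn⟩ := exists_nat_one_div_lt hε
  calc N t < N (f (n + 1)) + 1 / (n + 1) := happrox n t ((hs n).trans hst)
    _ ≤ N s + ε := add_le_add (hmono (hs (n + 1))) hn.le

end Preorder

theorem brezis_browder_general {S : Type*} (r : S → S → Prop)
    (hrefl : ∀ s, r s s) (htrans : ∀ a b c, r a b → r b c → r a c)
    (N : S → ℝ) (hbdd : ∃ M : ℝ, ∀ s, N s ≤ M)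
    (hmono : ∀ a b, r a b → N a ≤ N b)
    (hub : ∀ f : ℕ → S, (∀ n, r (f n) (f (n + 1))) → ∃ s, ∀ n, r (f n) s) :
    ∀ s₀ : S, ∃ s : S, r s₀ s ∧ ∀ sPlus, r s sPlus → N s = N sPlus := by
  let _ : Preorder S := { le := r, le_refl := hrefl, le_trans := htrans }
  obtain ⟨M, hM⟩ := hbdd
  exact exists_ge_forall_ge_eq ⟨M, forall_mem_range.2 hM⟩ (fun a b ↦ hmono a b) hub

/-- Brezis–Browder ordering principle: if `(S,⪯)` is a nonempty preordered set,
`𝒩 : S → ℝ` is bounded above and nondecreasing, and every increasing sequence has an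
upper bound, then every `s₀ ∈ S` is dominated by an `𝒩`-maximal element. -/
theorem brezis_browder {S : Type*} [Nonempty S] (r : S → S → Prop)
    (hrefl : ∀ s, r s s) (htrans : ∀ a b c, r a b → r b c → r a c)
    (N : S → ℝ) (hbdd : ∃ M : ℝ, ∀ s, N s ≤ M)
    (hmono : ∀ a b, r a b → N a ≤ N b)
    (hub : ∀ f : ℕ → S, (∀ n, r (f n) (f (n + 1))) → ∃ s, ∀ n, r (f n) s) :
    ∀ s₀ : S, ∃ s : S, r s₀ s ∧ ∀ sPlus, r s sPlus → N s = N sPlus :=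
  brezis_browder_general r hrefl htrans N hbdd hmono hub
end

section
/- Upper semicontinuity of bounded convex-valued multifunctions under weak-L² limits (Carjă-type convergence lemma, special one-dimensional-time form): Let F : [0,T] × H ⇒ H be upper semicontinuous with nonempty, closed, convex values, and satisfy |F(t,x)| ≤ c_F(1+|x|). Suppose fₙ → f weakly in L²(t₀,T;H), ρₙ(t) → t and xₙ(ρₙ(t)) → x(t) in H for a.e. t ∈ (t₀,T), and fₙ(t) ∈ F(ρₙ(t), xₙ(ρₙ(t))) a.e. on (t₀,T) for each n. Then f(t) ∈ F(t,x(t)) for a.e. t ∈ (t₀,T). -/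
open scoped RealInnerProductSpace
open MeasureTheory

section Aux
variable {H : Type*} [NormedAddCommGroup H] [InnerProductSpace ℝ H]

/-- support function of `F p.1 p.2` in direction `v` -/
noncomputable def suppFn (F : ℝ → H → Set H) (v : H) (p : ℝ × H) : ℝ :=
  sSup ((fun y => ⟪y, v⟫) '' F p.1 p.2)

theorem suppFn_bddAbove {F : ℝ → H → Set H} {c_F : ℝ}
    (hgrowth : ∀ t x y, y ∈ F t x → ‖y‖ ≤ c_F * (1 + ‖x‖))
    (v : H) (p : ℝ × H) :
    BddAbove ((fun y => ⟪y, v⟫) '' F p.1 p.2) := by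
  refine ⟨c_F * (1 + ‖p.2‖) * ‖v‖, ?_⟩
  rintro r ⟨y, hy, rfl⟩
  calc ⟪y, v⟫ ≤ ‖y‖ * ‖v‖ := real_inner_le_norm y v
    _ ≤ c_F * (1 + ‖p.2‖) * ‖v‖ :=
      mul_le_mul_of_nonneg_right (hgrowth _ _ y hy) (norm_nonneg v)

theorem le_suppFn {F : ℝ → H → Set H} {c_F : ℝ}
    (hgrowth : ∀ t x y, y ∈ F t x → ‖y‖ ≤ c_F * (1 + ‖x‖))
    (v : H) {p : ℝ × H} {y : H} (hy : y ∈ F p.1 p.2) :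
    ⟪y, v⟫ ≤ suppFn F v p :=
  le_csSup (suppFn_bddAbove hgrowth v p) ⟨y, hy, rfl⟩

theorem suppFn_le {F : ℝ → H → Set H}
    (hFne : ∀ t x, (F t x).Nonempty)
    (v : H) (p : ℝ × H) {c : ℝ}
    (h : ∀ y ∈ F p.1 p.2, ⟪y, v⟫ ≤ c) : suppFn F v p ≤ c := by
  refine csSup_le ((hFne p.1 p.2).image _) ?_
  rintro r ⟨y, hy, rfl⟩; exact h y hy

theorem abs_suppFn_le {F : ℝ → H → Set H} {c_F : ℝ}
    (hFne : ∀ t x, (F t x).Nonempty)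
    (hgrowth : ∀ t x y, y ∈ F t x → ‖y‖ ≤ c_F * (1 + ‖x‖))
    (v : H) (p : ℝ × H) :
    |suppFn F v p| ≤ c_F * (1 + ‖p.2‖) * ‖v‖ := by
  rw [abs_le]
  constructor
  · obtain ⟨y, hy⟩ := hFne p.1 p.2
    have h1 : -(c_F * (1 + ‖p.2‖) * ‖v‖) ≤ ⟪y, v⟫ := by
      have := neg_abs_le (⟪y, v⟫ : ℝ)
      have h2 : |⟪y, v⟫| ≤ ‖y‖ * ‖v‖ := abs_real_inner_le_norm y v
      have h3 : ‖y‖ * ‖v‖ ≤ c_F * (1 + ‖p.2‖) * ‖v‖ :=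
        mul_le_mul_of_nonneg_right (hgrowth _ _ y hy) (norm_nonneg v)
      linarith
    exact h1.trans (le_suppFn hgrowth v hy)
  · refine suppFn_le hFne v p fun y hy => ?_
    calc ⟪y, v⟫ ≤ ‖y‖ * ‖v‖ := real_inner_le_norm y v
      _ ≤ c_F * (1 + ‖p.2‖) * ‖v‖ :=
        mul_le_mul_of_nonneg_right (hgrowth _ _ y hy) (norm_nonneg v)

theorem suppFn_usc {F : ℝ → H → Set H} {c_F : ℝ}
    (hFne : ∀ t x, (F t x).Nonempty)
    (hgrowth : ∀ t x y, y ∈ F t x → ‖y‖ ≤ c_F * (1 + ‖x‖))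
    (hFusc : ∀ (t : ℝ) (x : H) (O : Set H), IsOpen O → F t x ⊆ O →
      ∃ U : Set (ℝ × H), IsOpen U ∧ (t, x) ∈ U ∧ ∀ p ∈ U, F p.1 p.2 ⊆ O)
    (v : H) : UpperSemicontinuous (suppFn F v) := by
  intro p c hc
  set O : Set H := {z | ⟪z, v⟫ < (suppFn F v p + c) / 2} with hO
  have hOopen : IsOpen O := by
    have : Continuous fun z : H => ⟪z, v⟫ := continuous_id.inner continuous_const
    exact isOpen_lt this continuous_const
  have hsub : F p.1 p.2 ⊆ O := by
    intro y hy
    have := le_suppFn hgrowth v (p := p) hy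
    simp only [hO, Set.mem_setOf_eq]
    linarith
  obtain ⟨U, hUopen, hpU, hU⟩ := hFusc p.1 p.2 O hOopen hsub
  filter_upwards [hUopen.mem_nhds (by simpa using hpU)] with q hq
  have : suppFn F v q ≤ (suppFn F v p + c) / 2 := by
    refine suppFn_le hFne v q fun y hy => le_of_lt ?_
    exact hU q hq hy
  linarith

end Aux

theorem mem_of_inner_le_sSup {H : Type*} [NormedAddCommGroup H]
    [InnerProductSpace ℝ H] [CompleteSpace H]
    {s : Set H} (hcl : IsClosed s) (hcv : Convex ℝ s) (hne : s.Nonempty)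
    {R : ℝ} (hR : ∀ y ∈ s, ‖y‖ ≤ R)
    {u : ℕ → H} (hu : DenseRange u)
    {z : H} (h : ∀ k, ⟪z, u k⟫ ≤ sSup ((fun y => ⟪y, u k⟫) '' s)) : z ∈ s := by
  by_contra hz
  obtain ⟨φ, m, hφs, hφz⟩ := geometric_hahn_banach_closed_point hcv hcl hz
  set v₀ : H := (InnerProductSpace.toDual ℝ H).symm φ with hv₀
  have hv₀app : ∀ y : H, ⟪y, v₀⟫ = φ y := by
    intro y
    rw [real_inner_comm]
    exact InnerProductSpace.toDual_symm_apply
  obtain ⟨y₀, hy₀⟩ := hne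
  have hR0 : 0 ≤ R := (norm_nonneg y₀).trans (hR y₀ hy₀)
  set δ : ℝ := φ z - m with hδ
  have hδpos : 0 < δ := by simp only [hδ]; linarith [hφz]
  set C : ℝ := ‖z‖ + R + 1 with hC
  have hCpos : 0 < C := by positivity
  set ε : ℝ := δ / C with hε
  have hεpos : 0 < ε := div_pos hδpos hCpos
  obtain ⟨k, hk⟩ := Metric.denseRange_iff.mp hu v₀ ε hεpos
  have hkd : ‖u k - v₀‖ < ε := by rwa [← dist_eq_norm, dist_comm]
  have hub : sSup ((fun y => ⟪y, u k⟫) '' s) ≤ m + R * ε := by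
    refine csSup_le ⟨_, Set.mem_image_of_mem _ hy₀⟩ ?_
    rintro r ⟨y, hy, rfl⟩
    have h1 : ⟪y, u k⟫ = ⟪y, v₀⟫ + ⟪y, u k - v₀⟫ := by
      rw [← inner_add_right, add_sub_cancel]
    have h2 : ⟪y, u k - v₀⟫ ≤ ‖y‖ * ‖u k - v₀‖ := real_inner_le_norm _ _
    have h3 : ‖y‖ * ‖u k - v₀‖ ≤ R * ε := by
      apply mul_le_mul (hR y hy) hkd.le (norm_nonneg _) hR0
    have h4 : ⟪y, v₀⟫ < m := by rw [hv₀app]; exact hφs y hy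
    linarith
  have hlb : φ z - ‖z‖ * ε ≤ ⟪z, u k⟫ := by
    have h1 : ⟪z, u k⟫ = ⟪z, v₀⟫ + ⟪z, u k - v₀⟫ := by
      rw [← inner_add_right, add_sub_cancel]
    have h2 : -(‖z‖ * ‖u k - v₀‖) ≤ ⟪z, u k - v₀⟫ :=
      neg_le_of_abs_le (abs_real_inner_le_norm _ _)
    have h3 : ‖z‖ * ‖u k - v₀‖ ≤ ‖z‖ * ε :=
      mul_le_mul_of_nonneg_left hkd.le (norm_nonneg _)
    have h4 : ⟪z, v₀⟫ = φ z := hv₀app z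
    linarith
  have hCε : C * ε = δ := by
    rw [hε]; field_simp
  have := (hlb.trans (h k)).trans hub
  have hexp : C * ε = ‖z‖ * ε + R * ε + ε := by rw [hC]; ring
  nlinarith [hεpos]

/-- Upper semicontinuity of bounded convex-valued multifunctions under weak-L² limits:
if `fₙ → f` weakly in `L²(t₀,T;H)`, `ρₙ(t) → t`, `xₙ(ρₙ(t)) → x(t)` a.e., and
`fₙ(t) ∈ F(ρₙ(t), xₙ(ρₙ(t)))` a.e., then `f(t) ∈ F(t,x(t))` a.e. on `(t₀,T)`. -/
theorem weak_limit_selection {H : Type*} [NormedAddCommGroup H]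
    [InnerProductSpace ℝ H] [CompleteSpace H] [SecondCountableTopology H]
    [MeasurableSpace H] [BorelSpace H]
    (t₀ T c_F : ℝ) (ht₀ : 0 ≤ t₀) (hT : t₀ < T)
    (F : ℝ → H → Set H)
    (hFne : ∀ t x, (F t x).Nonempty)
    (hFcl : ∀ t x, IsClosed (F t x))
    (hFcv : ∀ t x, Convex ℝ (F t x))
    (hFusc : ∀ (t : ℝ) (x : H) (O : Set H), IsOpen O → F t x ⊆ O →
      ∃ U : Set (ℝ × H), IsOpen U ∧ (t, x) ∈ U ∧ ∀ p ∈ U, F p.1 p.2 ⊆ O)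
    (hgrowth : ∀ t x y, y ∈ F t x → ‖y‖ ≤ c_F * (1 + ‖x‖))
    (f : ℝ → H) (fseq : ℕ → ℝ → H)
    (hf2 : MemLp f 2 (volume.restrict (Set.Ioc t₀ T)))
    (hfn2 : ∀ n, MemLp (fseq n) 2 (volume.restrict (Set.Ioc t₀ T)))
    (hweak : ∀ g : ℝ → H, MemLp g 2 (volume.restrict (Set.Ioc t₀ T)) →
      Filter.Tendsto (fun n => ∫ t in Set.Ioc t₀ T, ⟪fseq n t, g t⟫)
        Filter.atTop (nhds (∫ t in Set.Ioc t₀ T, ⟪f t, g t⟫)))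
    (ρ : ℕ → ℝ → ℝ) (hρm : ∀ n, Measurable (ρ n))
    (x : ℝ → H) (xseq : ℕ → ℝ → H)
    (hxm : Measurable x) (hxnm : ∀ n, Measurable (xseq n))
    (hconv : ∀ᵐ t ∂(volume.restrict (Set.Ioc t₀ T)),
      Filter.Tendsto (fun n => ρ n t) Filter.atTop (nhds t) ∧
      Filter.Tendsto (fun n => xseq n (ρ n t)) Filter.atTop (nhds (x t)))
    (hmem : ∀ n, ∀ᵐ t ∂(volume.restrict (Set.Ioc t₀ T)),
      fseq n t ∈ F (ρ n t) (xseq n (ρ n t))) :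
    ∀ᵐ t ∂(volume.restrict (Set.Ioc t₀ T)), f t ∈ F t (x t) := by
  set μ := volume.restrict (Set.Ioc t₀ T) with hμdef
  haveI : IsFiniteMeasure μ := by
    constructor
    rw [hμdef, Measure.restrict_apply_univ, Real.volume_Ioc]
    exact ENNReal.ofReal_lt_top
  -- c_F is nonnegative
  have hc0 : 0 ≤ c_F := by
    obtain ⟨y, hy⟩ := hFne 0 0
    have h1 := hgrowth 0 0 y hy
    have h2 := norm_nonneg y
    simp only [norm_zero] at h1
    nlinarith
  haveI : Nonempty H := ⟨0⟩
  set u : ℕ → H := TopologicalSpace.denseSeq H with hudef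
  have hdense : DenseRange u := TopologicalSpace.denseRange_denseSeq H
  -- exhausting sets
  set A : ℕ → Set ℝ := fun M => {t | ‖x t‖ ≤ (M : ℝ)} ∩ ⋂ n, {t | ‖xseq n (ρ n t)‖ ≤ (M : ℝ)}
    with hAdef
  have hA : ∀ M : ℕ, MeasurableSet (A M) := by
    intro M
    refine (measurableSet_le hxm.norm measurable_const).inter ?_
    exact MeasurableSet.iInter fun n =>
      measurableSet_le ((hxnm n).comp (hρm n)).norm measurable_const
  have hcover : ∀ᵐ t ∂μ, ∃ M : ℕ, t ∈ A M := by
    filter_upwards [hconv] with t ht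
    obtain ⟨ht1, ht2⟩ := ht
    have hbdd : BddAbove (Set.range fun n => ‖xseq n (ρ n t)‖) :=
      (ht2.norm).bddAbove_range
    obtain ⟨C, hC⟩ := hbdd
    obtain ⟨M, hM⟩ := exists_nat_ge (max C ‖x t‖)
    refine ⟨M, ?_, ?_⟩
    · exact le_trans (le_max_right _ _) hM
    · simp only [Set.mem_iInter, Set.mem_setOf_eq]
      intro n
      exact le_trans (hC ⟨n, rfl⟩) (le_trans (le_max_left _ _) hM)
  -- the key claim, for a fixed direction v and level M
  have claim : ∀ (v : H) (M : ℕ), ∀ᵐ t ∂(μ.restrict (A M)),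
      ⟪f t, v⟫ ≤ suppFn F v (t, x t) := by
    intro v M
    set ν := μ.restrict (A M) with hνdef
    set σb : ℝ → ℝ := fun t => suppFn F v (t, x t) with hσbdef
    set σs : ℕ → ℝ → ℝ := fun n t => suppFn F v (ρ n t, xseq n (ρ n t)) with hσsdef
    set h : ℕ → ℝ → ℝ := fun n t => max (σs n t - σb t) 0 with hhdef
    have hSm : Measurable (suppFn F v : ℝ × H → ℝ) :=
      (suppFn_usc hFne hgrowth hFusc v).measurable
    have hσbm : Measurable σb := hSm.comp (measurable_id.prodMk hxm)
    have hσsm : ∀ n, Measurable (σs n) := fun n =>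
      hSm.comp ((hρm n).prodMk ((hxnm n).comp (hρm n)))
    have hhm : ∀ n, Measurable (h n) := fun n => ((hσsm n).sub hσbm).max measurable_const
    -- pointwise convergence of h to 0
    have hh0 : ∀ᵐ t ∂μ, Filter.Tendsto (fun n => h n t) Filter.atTop (nhds 0) := by
      filter_upwards [hconv] with t ht
      obtain ⟨ht1, ht2⟩ := ht
      rw [NormedAddCommGroup.tendsto_nhds_zero]
      intro ε hε
      set O : Set H := {z | ⟪z, v⟫ < σb t + ε / 2} with hO
      have hOopen : IsOpen O :=
        isOpen_lt (continuous_id.inner continuous_const) continuous_const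
      have hsub : F t (x t) ⊆ O := by
        intro y hy
        have := le_suppFn hgrowth v (p := (t, x t)) hy
        simp only [hO, Set.mem_setOf_eq]
        have : ⟪y, v⟫ ≤ σb t := this
        linarith
      obtain ⟨U, hUopen, hpU, hU⟩ := hFusc t (x t) O hOopen hsub
      have hprod : Filter.Tendsto (fun n => (ρ n t, xseq n (ρ n t)))
          Filter.atTop (nhds (t, x t)) := ht1.prodMk_nhds ht2
      have hev : ∀ᶠ n in Filter.atTop, (ρ n t, xseq n (ρ n t)) ∈ U :=
        hprod.eventually_mem (hUopen.mem_nhds hpU)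
      filter_upwards [hev] with n hn
      have hσsle : σs n t ≤ σb t + ε / 2 := by
        refine suppFn_le hFne v _ fun y hy => le_of_lt ?_
        exact hU _ hn hy
      have h1 : h n t ≤ ε / 2 := max_le (by linarith) (by linarith)
      have h2 : 0 ≤ h n t := le_max_right _ _
      rw [Real.norm_eq_abs, abs_of_nonneg h2]
      linarith
    -- bounds on A M
    set K : ℝ := c_F * (1 + (M : ℝ)) * ‖v‖ with hKdef
    have hK0 : 0 ≤ K := by positivity
    have hbd_σb : ∀ t ∈ A M, |σb t| ≤ K := by
      intro t ht
      refine (abs_suppFn_le hFne hgrowth v (t, x t)).trans ?_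
      have : ‖x t‖ ≤ (M : ℝ) := ht.1
      have h1 : c_F * (1 + ‖x t‖) ≤ c_F * (1 + (M : ℝ)) := by nlinarith
      exact mul_le_mul_of_nonneg_right h1 (norm_nonneg v)
    have hbd_σs : ∀ n, ∀ t ∈ A M, |σs n t| ≤ K := by
      intro n t ht
      refine (abs_suppFn_le hFne hgrowth v (ρ n t, xseq n (ρ n t))).trans ?_
      have : ‖xseq n (ρ n t)‖ ≤ (M : ℝ) := by
        have := ht.2
        simp only [Set.mem_iInter, Set.mem_setOf_eq] at this
        exact this n
      have h1 : c_F * (1 + ‖xseq n (ρ n t)‖) ≤ c_F * (1 + (M : ℝ)) := by nlinarith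
      exact mul_le_mul_of_nonneg_right h1 (norm_nonneg v)
    have hbd_h : ∀ n, ∀ t ∈ A M, |h n t| ≤ 2 * K := by
      intro n t ht
      have h1 := hbd_σb t ht
      have h2 := hbd_σs n t ht
      have h0 : (0:ℝ) ≤ h n t := le_max_right _ _
      rw [abs_of_nonneg h0]
      rw [abs_le] at h1 h2
      exact max_le (by linarith) (by linarith)
    -- integrability of the inner products
    have hinner_f_int : Integrable (fun t => ⟪f t, v⟫) μ := by
      have h1 : Integrable f μ := hf2.integrable one_le_two
      refine (h1.norm.mul_const ‖v‖).mono'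
        (hf2.1.inner aestronglyMeasurable_const) ?_
      filter_upwards with t
      rw [Real.norm_eq_abs]
      exact abs_real_inner_le_norm _ _
    have hinner_fn_int : ∀ n, Integrable (fun t => ⟪fseq n t, v⟫) μ := by
      intro n
      have h1 : Integrable (fseq n) μ := (hfn2 n).integrable one_le_two
      refine (h1.norm.mul_const ‖v‖).mono'
        ((hfn2 n).1.inner aestronglyMeasurable_const) ?_
      filter_upwards with t
      rw [Real.norm_eq_abs]
      exact abs_real_inner_le_norm _ _
    -- pointwise a.e. inequality from the membership hypothesis
    have hmemineq : ∀ n, ∀ᵐ t ∂μ, ⟪fseq n t, v⟫ ≤ σs n t := by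
      intro n
      filter_upwards [hmem n] with t ht
      exact le_suppFn hgrowth v ht
    -- key inequality over any measurable subset of A M
    have key : ∀ B : Set ℝ, MeasurableSet B → B ⊆ A M →
        ∫ t in B, ⟪f t, v⟫ ∂μ ≤ ∫ t in B, σb t ∂μ := by
      intro B hB hBA
      have hgB : MemLp (B.indicator fun _ => v) 2 μ := (memLp_const v).indicator hB
      have hwk := hweak _ hgB
      have hrw : ∀ w : ℝ → H, ∫ t, ⟪w t, B.indicator (fun _ => v) t⟫ ∂μ
          = ∫ t in B, ⟪w t, v⟫ ∂μ := by
        intro w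
        rw [← integral_indicator hB]
        congr 1
        funext t
        by_cases htB : t ∈ B <;> simp [htB]
      rw [hrw f] at hwk
      simp only [hrw] at hwk
      -- integrability over B
      have hσbB : Integrable σb (μ.restrict B) := by
        refine Integrable.mono' (integrable_const K) hσbm.aestronglyMeasurable ?_
        rw [ae_restrict_iff' hB]
        exact Filter.Eventually.of_forall fun t ht => by
          simpa [Real.norm_eq_abs] using hbd_σb t (hBA ht)
      have hσsB : ∀ n, Integrable (σs n) (μ.restrict B) := by
        intro n
        refine Integrable.mono' (integrable_const K) (hσsm n).aestronglyMeasurable ?_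
        rw [ae_restrict_iff' hB]
        exact Filter.Eventually.of_forall fun t ht => by
          simpa [Real.norm_eq_abs] using hbd_σs n t (hBA ht)
      have hhB : ∀ n, Integrable (h n) (μ.restrict B) := by
        intro n
        refine Integrable.mono' (integrable_const (2 * K)) (hhm n).aestronglyMeasurable ?_
        rw [ae_restrict_iff' hB]
        exact Filter.Eventually.of_forall fun t ht => by
          simpa [Real.norm_eq_abs] using hbd_h n t (hBA ht)
      have step1 : ∀ n, ∫ t in B, ⟪fseq n t, v⟫ ∂μ ≤ ∫ t in B, σs n t ∂μ := fun n =>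
        integral_mono_ae ((hinner_fn_int n).restrict) (hσsB n)
          (ae_restrict_of_ae (hmemineq n))
      have step2 : ∀ n, ∫ t in B, σs n t ∂μ ≤ ∫ t in B, σb t ∂μ + ∫ t in B, h n t ∂μ := by
        intro n
        rw [← integral_add hσbB (hhB n)]
        refine integral_mono (hσsB n) (hσbB.add (hhB n)) fun t => ?_
        have h1 : σs n t - σb t ≤ h n t := le_max_left _ _
        simp only [Pi.add_apply]
        linarith
      have step3 : Filter.Tendsto (fun n => ∫ t in B, h n t ∂μ)
          Filter.atTop (nhds 0) := by
        have hdom := tendsto_integral_of_dominated_convergence (μ := μ.restrict B)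
          (F := fun n => h n) (f := fun _ => (0 : ℝ)) (fun _ => 2 * K)
          (fun n => (hhm n).aestronglyMeasurable) (integrable_const _)
          (fun n => by
            rw [ae_restrict_iff' hB]
            exact Filter.Eventually.of_forall fun t ht => by
              simpa [Real.norm_eq_abs] using hbd_h n t (hBA ht))
          (ae_restrict_of_ae hh0)
        simpa using hdom
      have hcomb : Filter.Tendsto (fun n => ∫ t in B, σb t ∂μ + ∫ t in B, h n t ∂μ)
          Filter.atTop (nhds (∫ t in B, σb t ∂μ)) := by
        simpa using tendsto_const_nhds.add step3
      exact le_of_tendsto_of_tendsto' hwk hcomb fun n => (step1 n).trans (step2 n)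
    -- conclude the claim via a.e. comparison of set integrals
    have hσb_int : Integrable σb ν := by
      refine Integrable.mono' (integrable_const K) hσbm.aestronglyMeasurable ?_
      rw [hνdef, ae_restrict_iff' (hA M)]
      exact Filter.Eventually.of_forall fun t ht => by
        simpa [Real.norm_eq_abs] using hbd_σb t ht
    have hG : Integrable (fun t => σb t - ⟪f t, v⟫) ν :=
      hσb_int.sub (hinner_f_int.restrict)
    have hae := ae_nonneg_of_forall_setIntegral_nonneg hG ?_
    · filter_upwards [hae] with t ht
      simp only [Pi.zero_apply] at ht
      linarith
    · intro s hs _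
      have hBmeas : MeasurableSet (s ∩ A M) := hs.inter (hA M)
      have hBsub : s ∩ A M ⊆ A M := Set.inter_subset_right
      have hkey := key (s ∩ A M) hBmeas hBsub
      have hres : ν.restrict s = μ.restrict (s ∩ A M) := by
        rw [hνdef, Measure.restrict_restrict hs]
      have hσbB : Integrable σb (μ.restrict (s ∩ A M)) := by
        refine Integrable.mono' (integrable_const K) hσbm.aestronglyMeasurable ?_
        rw [ae_restrict_iff' hBmeas]
        exact Filter.Eventually.of_forall fun t ht => by
          simpa [Real.norm_eq_abs] using hbd_σb t (hBsub ht)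
      have hfB : Integrable (fun t => ⟪f t, v⟫) (μ.restrict (s ∩ A M)) :=
        hinner_f_int.restrict
      calc (0:ℝ) ≤ ∫ t in s ∩ A M, σb t ∂μ - ∫ t in s ∩ A M, ⟪f t, v⟫ ∂μ := by
            linarith
        _ = ∫ t, (σb t - ⟪f t, v⟫) ∂(μ.restrict (s ∩ A M)) := (integral_sub hσbB hfB).symm
        _ = ∫ t in s, (σb t - ⟪f t, v⟫) ∂ν := by rw [hres]
  -- assemble: a.e. the inequality holds for all directions and all levels
  have hfinal : ∀ᵐ t ∂μ, ∀ k : ℕ, ∀ M : ℕ, t ∈ A M →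
      ⟪f t, u k⟫ ≤ suppFn F (u k) (t, x t) := by
    rw [MeasureTheory.ae_all_iff]
    intro k
    rw [MeasureTheory.ae_all_iff]
    intro M
    have := claim (u k) M
    rwa [ae_restrict_iff' (hA M)] at this
  filter_upwards [hfinal, hcover] with t ht hM
  obtain ⟨M, htM⟩ := hM
  refine mem_of_inner_le_sSup (hFcl t (x t)) (hFcv t (x t)) (hFne t (x t))
    (fun y hy => hgrowth t (x t) y hy) hdense fun k => ?_
  exact ht k M htM
end

section
/- Selection decomposition near a point of upper semicontinuity: let F : [0,T] × H ⇒ H be upper semicontinuous with nonempty closed convex values, let x : [t₀,T] → H be continuous, and let fˣ : (t₀,T) → H be measurable with fˣ(t) ∈ F(t,x(t)) a.e. Then for every n ∈ ℕ there exist δₙ ∈ (0,1/n], measurable bₙ, pₙ : (t₀,T) → H with fˣ = bₙ + pₙ a.e. on (t₀,T), bₙ(t) ∈ F(t₀,x(t₀)) a.e. on (t₀,t₀+δₙ), and |pₙ(t)| ≤ 1/n a.e. on (t₀,t₀+δₙ), with pₙ = 0 a.e. on (t₀+δₙ,T). -/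
open MeasureTheory
open scoped RealInnerProductSpace

/-- Metric projection onto a nonempty closed convex subset of a Hilbert space:
it lands in the set, realizes the distance, and is continuous (nonexpansive). -/
lemma exists_proj_convex {H : Type*} [NormedAddCommGroup H] [InnerProductSpace ℝ H]
    [CompleteSpace H] {K : Set H} (hne : K.Nonempty) (hcl : IsClosed K) (hcv : Convex ℝ K) :
    ∃ proj : H → H, Continuous proj ∧ (∀ u, proj u ∈ K) ∧
      ∀ u, ‖u - proj u‖ = Metric.infDist u K := by
  choose proj hmem hnorm using
    exists_norm_eq_iInf_of_complete_convex hne hcl.isComplete hcv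
  have hvar : ∀ u, ∀ w ∈ K, (inner ℝ (u - proj u) (w - proj u) : ℝ) ≤ 0 := fun u =>
    (norm_eq_iInf_iff_real_inner_le_zero hcv (hmem u)).1 (hnorm u)
  have hlip : LipschitzWith 1 proj := by
    refine LipschitzWith.of_dist_le_mul fun u₁ u₂ => ?_
    rw [NNReal.coe_one, one_mul, dist_eq_norm, dist_eq_norm]
    set v₁ := proj u₁
    set v₂ := proj u₂
    have h1 : (inner ℝ (u₁ - v₁) (v₂ - v₁) : ℝ) ≤ 0 := hvar u₁ v₂ (hmem u₂)
    have h2 : (inner ℝ (u₂ - v₂) (v₁ - v₂) : ℝ) ≤ 0 := hvar u₂ v₁ (hmem u₁)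
    have key : ‖v₁ - v₂‖ ^ 2 ≤ (inner ℝ (u₁ - u₂) (v₁ - v₂) : ℝ) := by
      have hsplit : (inner ℝ (v₁ - v₂) (v₁ - v₂) : ℝ) =
          (inner ℝ (v₁ - u₁) (v₁ - v₂) : ℝ) + (inner ℝ (u₁ - u₂) (v₁ - v₂) : ℝ) + (inner ℝ (u₂ - v₂) (v₁ - v₂) : ℝ) := by
        rw [← inner_add_left, ← inner_add_left]
        congr 1
        abel
      have h1' : (inner ℝ (v₁ - u₁) (v₁ - v₂) : ℝ) ≤ 0 := by
        have : (inner ℝ (v₁ - u₁) (v₁ - v₂) : ℝ) = (inner ℝ (u₁ - v₁) (v₂ - v₁) : ℝ) := by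
          rw [show v₁ - u₁ = -(u₁ - v₁) by abel, show v₁ - v₂ = -(v₂ - v₁) by abel,
            inner_neg_neg]
        rw [this]; exact h1
      calc ‖v₁ - v₂‖ ^ 2 = (inner ℝ (v₁ - v₂) (v₁ - v₂) : ℝ) := (real_inner_self_eq_norm_sq _).symm
        _ = (inner ℝ (v₁ - u₁) (v₁ - v₂) : ℝ) + (inner ℝ (u₁ - u₂) (v₁ - v₂) : ℝ) + (inner ℝ (u₂ - v₂) (v₁ - v₂) : ℝ) := hsplit
        _ ≤ (inner ℝ (u₁ - u₂) (v₁ - v₂) : ℝ) := by linarith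
    have key2 : ‖v₁ - v₂‖ ^ 2 ≤ ‖u₁ - u₂‖ * ‖v₁ - v₂‖ :=
      key.trans (real_inner_le_norm _ _)
    rcases eq_or_lt_of_le (norm_nonneg (v₁ - v₂)) with h | h
    · rw [← h]; exact norm_nonneg _
    · nlinarith [sq_nonneg (‖v₁ - v₂‖)]
  refine ⟨proj, hlip.continuous, hmem, fun u => ?_⟩
  rw [hnorm u, Metric.infDist_eq_iInf]
  simp_rw [dist_eq_norm]

/-- Selection decomposition near a point of upper semicontinuity: a measurable selection
`fˣ(t) ∈ F(t,x(t))` decomposes, for every `n`, as `fˣ = bₙ + pₙ` with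
`bₙ(t) ∈ F(t₀,x(t₀))` and `|pₙ(t)| ≤ 1/n` near `t₀`, and `pₙ = 0` after `t₀+δₙ`. -/
theorem selection_decomposition {H : Type*} [NormedAddCommGroup H]
    [InnerProductSpace ℝ H] [CompleteSpace H] [MeasurableSpace H] [BorelSpace H]
    (t₀ T : ℝ) (ht₀ : 0 ≤ t₀) (hT : t₀ < T)
    (F : ℝ → H → Set H)
    (hFne : ∀ t x, (F t x).Nonempty)
    (hFcl : ∀ t x, IsClosed (F t x))
    (hFcv : ∀ t x, Convex ℝ (F t x))
    (hFusc : ∀ (t : ℝ) (x : H) (O : Set H), IsOpen O → F t x ⊆ O →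
      ∃ U : Set (ℝ × H), IsOpen U ∧ (t, x) ∈ U ∧ ∀ p ∈ U, F p.1 p.2 ⊆ O)
    (x : ℝ → H) (hx : ContinuousOn x (Set.Icc t₀ T))
    (fx : ℝ → H) (hfxm : Measurable fx)
    (hsel : ∀ᵐ t ∂(volume.restrict (Set.Ioo t₀ T)), fx t ∈ F t (x t)) :
    ∀ n : ℕ, 0 < n → ∃ δ ∈ Set.Ioc (0:ℝ) (1/(n:ℝ)), ∃ b p : ℝ → H,
      Measurable b ∧ Measurable p ∧
      (∀ᵐ t ∂(volume.restrict (Set.Ioo t₀ T)), fx t = b t + p t) ∧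
      (∀ᵐ t ∂(volume.restrict (Set.Ioo t₀ (t₀ + δ))), b t ∈ F t₀ (x t₀)) ∧
      (∀ᵐ t ∂(volume.restrict (Set.Ioo t₀ (t₀ + δ))), ‖p t‖ ≤ 1/(n:ℝ)) ∧
      (∀ᵐ t ∂(volume.restrict (Set.Ioo (t₀ + δ) T)), p t = 0) := by
  intro n hn
  have hn' : (0:ℝ) < 1/(n:ℝ) := by positivity
  set K := F t₀ (x t₀) with hK
  obtain ⟨proj, hpc, hpmem, hpnorm⟩ :=
    exists_proj_convex (hFne t₀ (x t₀)) (hFcl t₀ (x t₀)) (hFcv t₀ (x t₀))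
  -- upper semicontinuity at (t₀, x t₀) with the 1/n-thickening of K
  set O := Metric.thickening (1/(n:ℝ)) K with hO
  have hKO : K ⊆ O := Metric.self_subset_thickening hn' K
  obtain ⟨U, hUopen, hUmem, hUsub⟩ := hFusc t₀ (x t₀) O Metric.isOpen_thickening hKO
  obtain ⟨ε, hε, hball⟩ := Metric.isOpen_iff.1 hUopen _ hUmem
  -- continuity of x within Icc at t₀
  have hxcont := hx t₀ (Set.mem_Icc.2 ⟨le_refl _, hT.le⟩)
  rw [Metric.continuousWithinAt_iff] at hxcont
  obtain ⟨δ₁, hδ₁, hδ₁prop⟩ := hxcont ε hε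
  -- choose δ
  set δ : ℝ := min (min (1/(n:ℝ)) (T - t₀)) (min δ₁ ε) with hδdef
  have hδpos : 0 < δ := by
    apply lt_min (lt_min hn' (by linarith)) (lt_min hδ₁ hε)
  have hδn : δ ≤ 1/(n:ℝ) := (min_le_left _ _).trans (min_le_left _ _)
  have hδT : δ ≤ T - t₀ := (min_le_left _ _).trans (min_le_right _ _)
  have hδ₁' : δ ≤ δ₁ := (min_le_right _ _).trans (min_le_left _ _)
  have hδε : δ ≤ ε := (min_le_right _ _).trans (min_le_right _ _)
  -- key: for t ∈ Ioo t₀ (t₀+δ), F t (x t) ⊆ O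
  have hkey : ∀ t ∈ Set.Ioo t₀ (t₀ + δ), F t (x t) ⊆ O := by
    intro t ht
    have htT : t ∈ Set.Icc t₀ T := ⟨ht.1.le, by linarith [ht.2]⟩
    have hdist_t : dist t t₀ < δ := by
      rw [Real.dist_eq, abs_of_pos (by linarith [ht.1] : (0:ℝ) < t - t₀)]
      linarith [ht.2]
    have hdx : dist (x t) (x t₀) < ε := hδ₁prop htT (lt_of_lt_of_le hdist_t hδ₁')
    have hmemU : (t, x t) ∈ U := by
      apply hball
      rw [Metric.mem_ball, Prod.dist_eq]
      exact max_lt (lt_of_lt_of_le hdist_t hδε) hdx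
    exact hUsub _ hmemU
  -- define b and p
  set b : ℝ → H := fun t => if t ∈ Set.Ioo t₀ (t₀ + δ) then proj (fx t) else fx t with hb
  set p : ℝ → H := fun t =>
    if t ∈ Set.Ioo t₀ (t₀ + δ) then fx t - proj (fx t) else 0 with hp
  have hbm : Measurable b := by
    apply Measurable.ite measurableSet_Ioo ((hpc.measurable).comp hfxm) hfxm
  have hsubm : Measurable (fun t => fx t - proj (fx t)) :=
    ((continuous_id.sub hpc).measurable).comp hfxm
  have hpm : Measurable p := Measurable.ite measurableSet_Ioo hsubm measurable_const
  refine ⟨δ, ⟨hδpos, hδn⟩, b, p, hbm, hpm, ?_, ?_, ?_, ?_⟩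
  · filter_upwards with t
    simp only [hb, hp]
    split_ifs with h <;> abel
  · have hsub : Set.Ioo t₀ (t₀ + δ) ⊆ Set.Ioo t₀ T := by
      apply Set.Ioo_subset_Ioo le_rfl (by linarith)
    have hsel' := ae_restrict_of_ae_restrict_of_subset hsub hsel
    filter_upwards [hsel', ae_restrict_mem measurableSet_Ioo] with t hsel'' hmem
    simp only [hb, if_pos hmem]
    exact hpmem (fx t)
  · have hsub : Set.Ioo t₀ (t₀ + δ) ⊆ Set.Ioo t₀ T := by
      apply Set.Ioo_subset_Ioo le_rfl (by linarith)
    have hsel' := ae_restrict_of_ae_restrict_of_subset hsub hsel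
    filter_upwards [hsel', ae_restrict_mem measurableSet_Ioo] with t hsel'' hmem
    have hthick : fx t ∈ O := hkey t hmem hsel''
    have : Metric.infDist (fx t) K < 1/(n:ℝ) :=
      (Metric.mem_thickening_iff_infDist_lt (hFne t₀ (x t₀))).1 hthick
    simp only [hp, if_pos hmem]
    exact le_of_lt (lt_of_le_of_lt (le_of_eq (hpnorm (fx t))) this)
  · filter_upwards [ae_restrict_mem measurableSet_Ioo] with t hmem
    have : t ∉ Set.Ioo t₀ (t₀ + δ) := fun h => absurd hmem.1 (not_lt.2 h.2.le)
    simp only [hp, if_neg this]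
end
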